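/- The Diagonal Lemma: let T be a theory which represents every computable function, and let P be a formula with one free variable. Then there exists a sentence A such that T proves A ↔ P(⌜A⌝), where ⌜A⌝ is the numeral of the code of A. -/

import Mathlib

open FirstOrder FirstOrder.Language

/-- Function symbols of the language of arithmetic `{0, S, +, ×}`. -/
inductive ArithFunc : ℕ → Type
  | zero : ArithFunc 0
  | succ : ArithFunc 1
  | add : ArithFunc 2
  | mul : ArithFunc 2

/-- The first-order language of arithmetic. -/
def L : Language := ⟨ArithFunc, fun _ => Empty⟩

/-- The term `0`. -/
def zeroT {α : Type} : L.Term α := Constants.term ArithFunc.zero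

/-- The term `S t`. -/
def succT {α : Type} (t : L.Term α) : L.Term α := Functions.apply₁ ArithFunc.succ t

/-- The term `s + t`. -/
def addT {α : Type} (s t : L.Term α) : L.Term α := Functions.apply₂ ArithFunc.add s t

/-- The term `s × t`. -/
def mulT {α : Type} (s t : L.Term α) : L.Term α := Functions.apply₂ ArithFunc.mul s t

/-- The numeral `n̄ = S … S 0`. -/
def num {α : Type} : ℕ → L.Term α
  | 0 => zeroT
  | n + 1 => succT (num n)

/-- The `i`-th bounded variable as a term. -/
def v {α : Type} {n : ℕ} (i : Fin n) : L.Term (α ⊕ Fin n) := Term.var (Sum.inr i)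

/-- The ordering `s < t := ∃ z, S z + s = t`. -/
def ltF {α : Type} {n : ℕ} (s t : L.Term (α ⊕ Fin n)) : L.BoundedFormula α n :=
  BoundedFormula.ex
    (Term.bdEqual
      (addT (succT (Term.var (Sum.inr (Fin.last n)))) (s.relabel (Sum.map id Fin.castSucc)))
      (t.relabel (Sum.map id Fin.castSucc)))

/-- Axiom S0 : `∀ x, ¬ S x = 0`. -/
def axS0 : L.Sentence := ∀' ∼(Term.bdEqual (succT (v 0)) zeroT)

/-- Axiom S1 : `∀ x y, S x = S y → x = y`. -/
def axS1 : L.Sentence := ∀' ∀' (Term.bdEqual (succT (v 0)) (succT (v 1)) ⟹ Term.bdEqual (v 0) (v 1))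

/-- Axiom S2 : `∀ x, x = 0 ∨ ∃ y, S y = x`. -/
def axS2 : L.Sentence := ∀' (Term.bdEqual (v 0) zeroT ⊔ ∃' (Term.bdEqual (succT (v 1)) (v 0)))

/-- Axiom A0 : `∀ x, x + 0 = x`. -/
def axA0 : L.Sentence := ∀' (Term.bdEqual (addT (v 0) zeroT) (v 0))

/-- Axiom A1 : `∀ x y, x + S y = S (x + y)`. -/
def axA1 : L.Sentence := ∀' ∀' (Term.bdEqual (addT (v 0) (succT (v 1))) (succT (addT (v 0) (v 1))))

/-- Axiom M0 : `∀ x, x × 0 = 0`. -/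
def axM0 : L.Sentence := ∀' (Term.bdEqual (mulT (v 0) zeroT) zeroT)

/-- Axiom M1 : `∀ x y, x × S y = x + (x × y)`. -/
def axM1 : L.Sentence := ∀' ∀' (Term.bdEqual (mulT (v 0) (succT (v 1))) (addT (v 0) (mulT (v 0) (v 1))))

/-- Robinson Arithmetic. -/
def Q : L.Theory := {axS0, axS1, axS2, axA0, axA1, axM0, axM1}

/-- The induction axiom for the formula `φ` with one (bounded) variable:
`(φ(0) ∧ ∀ x, φ(x) → φ(S x)) → ∀ x, φ(x)`. -/
def indAx (φ : L.BoundedFormula Empty 1) : L.Sentence :=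
  ((∀' (Term.bdEqual (v 0) zeroT ⟹ φ)) ⊓
      ∀' (φ ⟹ ∀' (Term.bdEqual (v 1) (succT (v 0)) ⟹ φ.liftAt 1 0))) ⟹ ∀' φ

/-- Peano Arithmetic: Robinson arithmetic plus the induction schema. -/
def PA : L.Theory := Q ∪ Set.range indAx

/-- `∃! y, ψ(y)`, for `ψ` with one bounded variable. -/
def exUnique (ψ : L.BoundedFormula Empty 1) : L.Sentence :=
  ∃' (ψ ⊓ ∀' (ψ.liftAt 1 0 ⟹ Term.bdEqual (v 1) (v 0)))

/-- `φ(x̄⃗, ȳ)`: the result of substituting the numerals of `xs` and `y` for the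
free variables of `φ`. -/
def appNum {α : Type} (φ : L.Formula (α ⊕ Fin 1)) (xs : α → ℕ) (y : ℕ) : L.Sentence :=
  φ.subst (Sum.elim (fun i => num (xs i)) (fun _ => num y))

/-- `φ(x̄⃗, y)` with the numerals of `xs` substituted for the input variables and the
output variable `y` left as a bounded variable. -/
def outFormula {α : Type} (φ : L.Formula (α ⊕ Fin 1)) (xs : α → ℕ) : L.BoundedFormula Empty 1 :=
  (BoundedFormula.relabel (β := α) (n := 1)
      (Sum.elim (fun i => Sum.inl i) (fun _ => Sum.inr 0)) φ).subst (fun i => num (xs i))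

/-- `f` is represented in `T` by the formula `φ`: whenever `f xs = y`, the theory `T` proves
`(∃! y, φ(x̄⃗, y)) ∧ φ(x̄⃗, ȳ)`. -/
def RepresentsBy (T : L.Theory) {α : Type} (f : (α → ℕ) → ℕ) (φ : L.Formula (α ⊕ Fin 1)) : Prop :=
  ∀ (xs : α → ℕ) (y : ℕ), f xs = y →
    T ⊨ᵇ (exUnique (outFormula φ xs) ⊓ appNum φ xs y : L.Sentence)

/-- `f` is representable in `T`. -/
def Represents (T : L.Theory) {α : Type} (f : (α → ℕ) → ℕ) : Prop :=
  ∃ φ : L.Formula (α ⊕ Fin 1), RepresentsBy T f φ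

instance : Encodable (Σ n, L.Functions n) where
  encode x := match x with
    | ⟨_, ArithFunc.zero⟩ => 0
    | ⟨_, ArithFunc.succ⟩ => 1
    | ⟨_, ArithFunc.add⟩ => 2
    | ⟨_, ArithFunc.mul⟩ => 3
  decode n := match n with
    | 0 => some ⟨0, ArithFunc.zero⟩
    | 1 => some ⟨1, ArithFunc.succ⟩
    | 2 => some ⟨2, ArithFunc.add⟩
    | 3 => some ⟨2, ArithFunc.mul⟩
    | _ => none
  encodek := by rintro ⟨n, f⟩; cases f <;> rfl

instance : Encodable (Σ n, L.Relations n) where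
  encode x := x.2.elim
  decode _ := none
  encodek x := x.2.elim

/-- A fixed effective Gödel coding of sentences as natural numbers. -/
def code (A : L.Sentence) : ℕ := Encodable.encode A.listEncode

/-- `P(n̄)` : the predicate `P` applied to the numeral of `n`. -/
def papp (P : L.Formula (Fin 1)) (m : ℕ) : L.Sentence := P.subst (fun _ => num m)

/-- `P(⌜A⌝)` : the predicate `P` applied to the numeral of the code of the sentence `A`. -/
def pcode (P : L.Formula (Fin 1)) (A : L.Sentence) : L.Sentence := papp P (code A)

/-- The standard model `ℕ` of the language of arithmetic. -/
instance : L.Structure ℕ where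
  funMap f := match f with
    | ArithFunc.zero => fun _ => 0
    | ArithFunc.succ => fun x => x 0 + 1
    | ArithFunc.add => fun x => x 0 + x 1
    | ArithFunc.mul => fun x => x 0 * x 1
  RelMap r := r.elim

/-- Consistency of a theory: it does not prove both a sentence and its negation. -/
def Consistent (T : L.Theory) : Prop := ¬ ∃ A : L.Sentence, T ⊨ᵇ A ∧ T ⊨ᵇ (∼A : L.Sentence)

/-- A theory is computably enumerable: the set of codes of its theorems is c.e. -/
def TheoryCE (T : L.Theory) : Prop :=
  REPred fun n : ℕ => ∃ A : L.Sentence, code A = n ∧ T ⊨ᵇ A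

namespace Diag
open Encodable FirstOrder FirstOrder.Language

/-- token code of `Sum.inr ⟨0, zero⟩`. -/
def cZ : ℕ := 1
/-- token code of `Sum.inr ⟨1, succ⟩`. -/
def cS : ℕ := 3

/-- encodes of the token list of the numeral `num m`. -/
def numTokL : ℕ → List ℕ
  | 0 => [cZ]
  | m + 1 => cS :: numTokL m

/-- transform a term's token-code list: substitute the numeral of `n` for the free variable. -/
def tmap (n : ℕ) (l : List ℕ) : List ℕ :=
  l.flatMap fun s => if s % 4 = 0 then numTokL n else [s]

def lEnc (l : List ℕ) : ℕ := Encodable.encode l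
def lDec (p : ℕ) : List ℕ := (Encodable.decode p).getD []

/-- transform a formula entry code. -/
def emap (n e : ℕ) : ℕ :=
  if e % 2 = 0 then 2 * Nat.pair (e / 2).unpair.1 (lEnc (tmap n (lDec (e / 2).unpair.2)))
  else e

def g (n p : ℕ) : ℕ := lEnc ((lDec p).map (emap n))

def d (n : ℕ) : ℕ := g n n.unpair.2

theorem numTokL_prim : Primrec numTokL := by
  have h : Primrec fun m : ℕ => Nat.rec (motive := fun _ => List ℕ) [cZ] (fun _ ih => cS :: ih) m :=
    Primrec.nat_rec₁ _ (Primrec.list_cons.comp (Primrec.const cS) Primrec.snd).to₂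
  refine h.of_eq fun m => ?_
  induction m with
  | zero => rfl
  | succ m ih => simpa [numTokL] using ih.symm ▸ rfl

theorem tmap_prim : Primrec₂ tmap := by
  refine Primrec.list_flatMap Primrec.snd ?_
  refine Primrec.ite ?_ (numTokL_prim.comp (Primrec.fst.comp Primrec.fst)) (Primrec.list_cons.comp Primrec.snd (Primrec.const []))
  exact (Primrec.eq.comp (Primrec.nat_mod.comp Primrec.snd (Primrec.const 4)) (Primrec.const 0))

theorem lEnc_prim : Primrec lEnc := Primrec.encode
theorem lDec_prim : Primrec lDec :=
  Primrec.option_getD.comp Primrec.decode (Primrec.const [])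

theorem emap_prim : Primrec₂ emap := by
  have h2 : Primrec fun p : ℕ × ℕ => p.2 / 2 := Primrec.nat_div.comp Primrec.snd (Primrec.const 2)
  have hu1 : Primrec fun p : ℕ × ℕ => (p.2 / 2).unpair.1 :=
    Primrec.fst.comp (Primrec.unpair.comp h2)
  have hu2 : Primrec fun p : ℕ × ℕ => (p.2 / 2).unpair.2 :=
    Primrec.snd.comp (Primrec.unpair.comp h2)
  refine Primrec.ite ?_ ?_ Primrec.snd
  · exact Primrec.eq.comp (Primrec.nat_mod.comp Primrec.snd (Primrec.const 2)) (Primrec.const 0)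
  · refine Primrec.nat_mul.comp (Primrec.const 2) ?_
    refine Primrec₂.natPair.comp hu1 ?_
    exact lEnc_prim.comp (tmap_prim.comp Primrec.fst (lDec_prim.comp hu2))

theorem g_prim : Primrec₂ g :=
  (lEnc_prim.comp (Primrec.list_map (lDec_prim.comp Primrec.snd)
    ((emap_prim.comp (Primrec.fst.comp Primrec.fst) Primrec.snd).to₂))).to₂

theorem d_prim : Primrec d :=
  g_prim.comp Primrec.id (Primrec.snd.comp Primrec.unpair)

theorem d_computable : Computable d := d_prim.to_comp

theorem f_computable : Computable fun xs : Fin 1 → ℕ => d (xs 0) :=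
  d_computable.comp (Computable.fin_app.comp Computable.id (Computable.const 0))

end Diag
namespace Diag
open Encodable FirstOrder FirstOrder.Language

theorem enc_list {X : Type} [Encodable X] (l : List X) :
    Encodable.encode l = lEnc (l.map Encodable.encode) := by
  induction l with
  | nil => rfl
  | cons a l ih => simp [lEnc, Encodable.encode_list_cons, ih]

theorem lDec_lEnc (l : List ℕ) : lDec (lEnc l) = l := by
  simp [lDec, lEnc, Encodable.encodek]

theorem num_relabel {γ δ : Type} (f : γ → δ) (m : ℕ) :
    (num m : L.Term γ).relabel f = num m := by
  induction m with
  | zero =>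
    simp only [num, zeroT, Constants.term, Term.relabel]
    exact congrArg _ (Subsingleton.elim _ _)
  | succ m ih =>
    simp only [num, succT, Functions.apply₁, Term.relabel, ih]
    congr
    funext i
    fin_cases i <;> simp [ih]

theorem listEncode_subst {α β : Type} (t : L.Term α) (σ : α → L.Term β) :
    (t.subst σ).listEncode
      = t.listEncode.flatMap
          (Sum.elim (fun a => (σ a).listEncode) (fun f => [Sum.inr f])) := by
  induction t with
  | var a => simp [Term.listEncode, Term.subst]
  | func f ts ih =>
    simp only [Term.subst, Term.listEncode, List.flatMap_cons, Sum.elim_inr,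
      List.singleton_append, List.cons.injEq, true_and]
    rw [List.flatMap_assoc]
    exact List.flatMap_congr fun i _ => ih i

theorem num_tokens (k m : ℕ) :
    ((num m : L.Term (Empty ⊕ Fin k)).listEncode).map Encodable.encode = numTokL m := by
  induction m with
  | zero => rfl
  | succ m ih =>
    simp only [num, succT, Functions.apply₁, Term.listEncode, numTokL]
    simp only [List.map_cons, List.cons.injEq]
    constructor
    · rfl
    · rw [← ih]
      congr 1
      simp [List.finRange_succ]

end Diag
namespace Diag
open Encodable FirstOrder FirstOrder.Language

/-- The term substitution used by `BoundedFormula.subst` when substituting `num n` for the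
unique free variable. -/
def sub1 (n k : ℕ) : Fin 1 ⊕ Fin k → L.Term (Empty ⊕ Fin k) :=
  Sum.elim (Term.relabel Sum.inl ∘ fun _ : Fin 1 => (num n : L.Term Empty))
    (Term.var ∘ Sum.inr)

theorem tmap_correct {k : ℕ} (n : ℕ) (t : L.Term (Fin 1 ⊕ Fin k)) :
    tmap n (t.listEncode.map Encodable.encode)
      = ((t.subst (sub1 n k)).listEncode).map Encodable.encode := by
  rw [listEncode_subst, List.map_flatMap]
  unfold tmap
  rw [List.flatMap_map]
  apply List.flatMap_congr
  rintro ((a | i) | f) _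
  · have he : Encodable.encode (Sum.inl (Sum.inl a) :
        (Fin 1 ⊕ Fin k) ⊕ (Σ i, L.Functions i)) = 2 * (2 * Encodable.encode a) := by
      simp [Encodable.encode_inl]
    rw [he, if_pos (by omega)]
    simp only [Sum.elim_inl, sub1, Function.comp_apply, num_relabel, num_tokens]
  · have he : Encodable.encode (Sum.inl (Sum.inr i) :
        (Fin 1 ⊕ Fin k) ⊕ (Σ i, L.Functions i)) = 2 * (2 * Encodable.encode i + 1) := by
      simp [Encodable.encode_inl, Encodable.encode_inr]
    rw [he, if_neg (by omega)]
    simp only [Sum.elim_inl, sub1, Function.comp_apply, Sum.elim_inr, Term.listEncode,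
      List.map_cons, List.map_nil]
    simp [Encodable.encode_inl, Encodable.encode_inr]
  · have he : Encodable.encode (Sum.inr f :
        (Fin 1 ⊕ Fin k) ⊕ (Σ i, L.Functions i)) = 2 * Encodable.encode f + 1 := by
      simp [Encodable.encode_inr]
    rw [he, if_neg (by omega)]
    simp [Encodable.encode_inr]

theorem emap_entry {l : ℕ} (n : ℕ) (t : L.Term (Fin 1 ⊕ Fin l)) :
    emap n (Encodable.encode (Sum.inl ⟨l, t⟩ :
        (Σ k, L.Term (Fin 1 ⊕ Fin k)) ⊕ ((Σ n, L.Relations n) ⊕ ℕ)))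
      = Encodable.encode (Sum.inl ⟨l, t.subst (sub1 n l)⟩ :
        (Σ k, L.Term (Empty ⊕ Fin k)) ⊕ ((Σ n, L.Relations n) ⊕ ℕ)) := by
  have h1 : Encodable.encode (Sum.inl ⟨l, t⟩ :
      (Σ k, L.Term (Fin 1 ⊕ Fin k)) ⊕ ((Σ n, L.Relations n) ⊕ ℕ))
      = 2 * Nat.pair l (Encodable.encode t.listEncode) := by
    simp [Encodable.encode_inl, Encodable.encode_sigma_val]
    rfl
  have h2 : Encodable.encode (Sum.inl ⟨l, t.subst (sub1 n l)⟩ :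
      (Σ k, L.Term (Empty ⊕ Fin k)) ⊕ ((Σ n, L.Relations n) ⊕ ℕ))
      = 2 * Nat.pair l (Encodable.encode (t.subst (sub1 n l)).listEncode) := by
    simp [Encodable.encode_inl, Encodable.encode_sigma_val]
    rfl
  rw [h1, h2, emap, if_pos (by omega)]
  have h3 : 2 * Nat.pair l (Encodable.encode t.listEncode) / 2
      = Nat.pair l (Encodable.encode t.listEncode) := by omega
  rw [h3, Nat.unpair_pair]
  simp only
  congr 1
  rw [enc_list t.listEncode, lDec_lEnc, tmap_correct, ← enc_list]

theorem subst_falsum {m : ℕ} (tf : Fin 1 → L.Term Empty) :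
    (BoundedFormula.falsum : L.BoundedFormula (Fin 1) m).subst tf = BoundedFormula.falsum := rfl

theorem subst_equal {m : ℕ} (t₁ t₂ : L.Term (Fin 1 ⊕ Fin m)) (tf : Fin 1 → L.Term Empty) :
    (BoundedFormula.equal t₁ t₂ : L.BoundedFormula (Fin 1) m).subst tf
      = BoundedFormula.equal (t₁.subst (Sum.elim (Term.relabel Sum.inl ∘ tf) (Term.var ∘ Sum.inr)))
          (t₂.subst (Sum.elim (Term.relabel Sum.inl ∘ tf) (Term.var ∘ Sum.inr))) := rfl

theorem subst_imp {m : ℕ} (f₁ f₂ : L.BoundedFormula (Fin 1) m) (tf : Fin 1 → L.Term Empty) :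
    (f₁.imp f₂).subst tf = (f₁.subst tf).imp (f₂.subst tf) := rfl

theorem subst_all {m : ℕ} (f : L.BoundedFormula (Fin 1) (m + 1)) (tf : Fin 1 → L.Term Empty) :
    (f.all).subst tf = (f.subst tf).all := rfl

theorem fmap_correct {m : ℕ} (n : ℕ) (B : L.BoundedFormula (Fin 1) m) :
    ((B.subst (fun _ => (num n : L.Term Empty))).listEncode).map Encodable.encode
      = (B.listEncode.map Encodable.encode).map (emap n) := by
  induction B with
  | falsum =>
    rename_i l
    simp only [subst_falsum, BoundedFormula.listEncode,
      List.map_cons, List.map_nil, List.cons.injEq, and_true]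
    have h1 : Encodable.encode (Sum.inr (Sum.inr (l + 2)) :
        (Σ k, L.Term (Fin 1 ⊕ Fin k)) ⊕ ((Σ n, L.Relations n) ⊕ ℕ)) = 2 * (2 * (l + 2) + 1) + 1 := by
      simp [Encodable.encode_inr]
    have h2 : Encodable.encode (Sum.inr (Sum.inr (l + 2)) :
        (Σ k, L.Term (Empty ⊕ Fin k)) ⊕ ((Σ n, L.Relations n) ⊕ ℕ)) = 2 * (2 * (l + 2) + 1) + 1 := by
      simp [Encodable.encode_inr]
    rw [h1, h2, emap, if_neg (by omega)]
  | equal t₁ t₂ =>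
    simp only [subst_equal, BoundedFormula.listEncode,
      List.map_cons, List.map_nil, List.cons.injEq, and_true]
    exact ⟨(emap_entry n t₁).symm, (emap_entry n t₂).symm⟩
  | rel R ts => cases R
  | imp f₁ f₂ ih₁ ih₂ =>
    show List.map Encodable.encode
        (((Sum.inr (Sum.inr 0) :: (f₁.subst fun _ => (num n : L.Term Empty)).listEncode))
          ++ (f₂.subst fun _ => (num n : L.Term Empty)).listEncode)
      = List.map (emap n) (List.map Encodable.encode
          ((Sum.inr (Sum.inr 0) :: f₁.listEncode) ++ f₂.listEncode))
    simp only [List.map_append, List.map_cons, List.cons_append, ih₁, ih₂]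
    congr 1
  | all f ih =>
    simp only [subst_all, BoundedFormula.listEncode,
      List.map_cons, List.cons.injEq]
    constructor
    · have h1 : Encodable.encode (Sum.inr (Sum.inr 1) :
          (Σ k, L.Term (Fin 1 ⊕ Fin k)) ⊕ ((Σ n, L.Relations n) ⊕ ℕ)) = 2 * (2 * 1 + 1) + 1 := by
        simp [Encodable.encode_inr]
      have h2 : Encodable.encode (Sum.inr (Sum.inr 1) :
          (Σ k, L.Term (Empty ⊕ Fin k)) ⊕ ((Σ n, L.Relations n) ⊕ ℕ)) = 2 * (2 * 1 + 1) + 1 := by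
        simp [Encodable.encode_inr]
      rw [h1, h2, emap, if_neg (by omega)]
    · exact ih

theorem g_correct (B : L.Formula (Fin 1)) (n : ℕ) :
    g n (Encodable.encode B.listEncode) = code (papp B n) := by
  unfold g code papp
  rw [enc_list B.listEncode, lDec_lEnc, ← fmap_correct, ← enc_list]

theorem d_correct (B : L.Formula (Fin 1)) :
    d (Nat.pair 0 (Encodable.encode B.listEncode))
      = code (papp B (Nat.pair 0 (Encodable.encode B.listEncode))) := by
  unfold d
  rw [Nat.unpair_pair]
  exact g_correct B _

end Diag
namespace Diag
open FirstOrder FirstOrder.Language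

section Sem
variable {M : Type} [L.Structure M]

/-- The value of the numeral `num m` in a structure `M`. -/
noncomputable def NM (M : Type) [L.Structure M] (m : ℕ) : M :=
  (num m : L.Term Empty).realize (fun x => x.elim)

theorem realize_num {γ : Type} (env : γ → M) (m : ℕ) :
    (num m : L.Term γ).realize env = NM M m := by
  induction m with
  | zero =>
    simp only [NM, num, zeroT, Constants.term, Term.realize]
    congr 1
    exact Subsingleton.elim _ _
  | succ m ih =>
    simp only [NM, num, succT, Functions.apply₁, Term.realize] at *
    congr 1
    funext i
    fin_cases i
    simpa using ih

theorem realize_exUnique {ψ : L.BoundedFormula Empty 1} {v0 : Empty → M} {xs0 : Fin 0 → M} :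
    BoundedFormula.Realize (exUnique ψ) v0 xs0 ↔
      ∃ a : M, ψ.Realize v0 (fun _ => a) ∧ ∀ b : M, ψ.Realize v0 (fun _ => b) → b = a := by
  unfold exUnique
  rw [BoundedFormula.realize_ex]
  apply exists_congr; intro a
  rw [BoundedFormula.realize_inf, BoundedFormula.realize_all]
  have hsnoc : Fin.snoc xs0 a = (fun _ => a : Fin 1 → M) := by
    funext i; fin_cases i; rfl
  rw [hsnoc]
  apply and_congr Iff.rfl
  apply forall_congr'; intro b
  rw [BoundedFormula.realize_imp,
    BoundedFormula.realize_liftAt (by omega : (0:ℕ) ≤ 1)]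
  have h2 : ((Fin.snoc (fun _ => a : Fin 1 → M) b) ∘
      fun i : Fin 1 => if (i : ℕ) < 0 then Fin.castAdd 1 i else Fin.addNat i 1)
      = (fun _ => b : Fin 1 → M) := by
    funext i; fin_cases i; rfl
  rw [h2]
  apply imp_congr Iff.rfl
  constructor
  · intro h
    have := h  -- realize bdEqual
    rw [BoundedFormula.realize_bdEqual] at this
    simpa [v, Term.realize, Fin.snoc] using this
  · intro h
    rw [BoundedFormula.realize_bdEqual]
    simpa [v, Term.realize, Fin.snoc] using h


theorem realize_congr {α : Type} {k : ℕ} {ψ : L.BoundedFormula α k} {v v' : α → M}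
    {xs xs' : Fin k → M} (h : v = v') (h2 : xs = xs') :
    BoundedFormula.Realize ψ v xs ↔ BoundedFormula.Realize ψ v' xs' := by
  rw [h, h2]

theorem realize_outFormula {φ : L.Formula (Fin 1 ⊕ Fin 1)} {xsn : Fin 1 → ℕ} {v0 : Empty → M}
    {b : M} :
    BoundedFormula.Realize (outFormula φ xsn) v0 (fun _ => b)
      ↔ φ.Realize (Sum.elim (fun i => NM M (xsn i)) (fun _ : Fin 1 => b)) := by
  unfold outFormula Formula.Realize
  rw [BoundedFormula.realize_subst, BoundedFormula.realize_relabel]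
  refine realize_congr (funext fun x => ?_) (Subsingleton.elim _ _)
  cases x with
  | inl i => simp [realize_num]
  | inr i => simp

theorem realize_appNum {φ : L.Formula (Fin 1 ⊕ Fin 1)} {xsn : Fin 1 → ℕ} {y : ℕ}
    {v0 : Empty → M} {xs0 : Fin 0 → M} :
    BoundedFormula.Realize (appNum φ xsn y) v0 xs0
      ↔ φ.Realize (Sum.elim (fun i => NM M (xsn i)) (fun _ : Fin 1 => NM M y)) := by
  unfold appNum Formula.Realize
  rw [BoundedFormula.realize_subst]
  refine realize_congr (funext fun x => ?_) (Subsingleton.elim _ _)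
  cases x with
  | inl i => simp [realize_num]
  | inr i => simp [realize_num]

theorem realize_papp {P : L.Formula (Fin 1)} {m : ℕ} {v0 : Empty → M} {xs0 : Fin 0 → M} :
    BoundedFormula.Realize (papp P m) v0 xs0 ↔ P.Realize (fun _ : Fin 1 => NM M m) := by
  unfold papp Formula.Realize
  rw [BoundedFormula.realize_subst]
  refine realize_congr (funext fun x => ?_) (Subsingleton.elim _ _)
  simp [realize_num]

end Sem

/-- The diagonal formula `∀ y (φ(x, y) → P(y))`. -/
def BObj (φ : L.Formula (Fin 1 ⊕ Fin 1)) (P : L.Formula (Fin 1)) : L.Formula (Fin 1) :=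
  BoundedFormula.all
    ((BoundedFormula.relabel (Sum.elim (fun i => Sum.inl i) (fun _ => Sum.inr 0)) φ).imp
      (BoundedFormula.relabel (fun _ : Fin 1 => Sum.inr (0 : Fin 1)) P))

section Sem2
variable {M : Type} [L.Structure M]

theorem realize_pappB {φ : L.Formula (Fin 1 ⊕ Fin 1)} {P : L.Formula (Fin 1)} {n : ℕ}
    {v0 : Empty → M} {xs0 : Fin 0 → M} :
    BoundedFormula.Realize (papp (BObj φ P) n) v0 xs0
      ↔ ∀ b : M, φ.Realize (Sum.elim (fun _ : Fin 1 => NM M n) (fun _ : Fin 1 => b))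
          → P.Realize (fun _ : Fin 1 => b) := by
  unfold papp BObj
  rw [BoundedFormula.realize_subst, BoundedFormula.realize_all]
  apply forall_congr'; intro b
  rw [BoundedFormula.realize_imp, BoundedFormula.realize_relabel,
    BoundedFormula.realize_relabel]
  apply imp_congr
  · unfold Formula.Realize
    refine realize_congr (funext fun x => ?_) (Subsingleton.elim _ _)
    cases x with
    | inl i => simp [realize_num, Fin.snoc]
    | inr i => simp [Fin.snoc]
  · unfold Formula.Realize
    refine realize_congr (funext fun x => ?_) (Subsingleton.elim _ _)
    simp [Fin.snoc]

end Sem2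
end Diag


/-- The Diagonal Lemma: if `T` represents every computable function then every formula `P`
with one free variable has a fixed point: a sentence `A` with `T ⊢ A ↔ P(⌜A⌝)`. -/
theorem diagonal_lemma (T : L.Theory)
    (hT : ∀ (k : ℕ) (f : (Fin k → ℕ) → ℕ), Computable f → Represents T f)
    (P : L.Formula (Fin 1)) :
    ∃ A : L.Sentence, T ⊨ᵇ (A ⇔ pcode P A : L.Sentence) := by
  obtain ⟨φ, hφ⟩ := hT 1 (fun xs => Diag.d (xs 0)) Diag.f_computable
  refine ⟨papp (Diag.BObj φ P) (Nat.pair 0 (Encodable.encode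
    (BoundedFormula.listEncode (Diag.BObj φ P)))), ?_⟩
  set B : L.Formula (Fin 1) := Diag.BObj φ P with hB
  set n : ℕ := Nat.pair 0 (Encodable.encode (BoundedFormula.listEncode B)) with hn
  have hd : Diag.d n = code (papp B n) := Diag.d_correct B
  have hrep := hφ (fun _ => n) (code (papp B n)) hd
  intro M v0 xs0
  have h1 := hrep M v0 xs0
  rw [BoundedFormula.realize_inf] at h1
  obtain ⟨hEU, hApp⟩ := h1
  rw [Diag.realize_exUnique] at hEU
  obtain ⟨a, ha, hau⟩ := hEU
  rw [Diag.realize_appNum] at hApp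
  rw [BoundedFormula.realize_iff]
  rw [show pcode P (papp B n) = papp P (code (papp B n)) from rfl]
  rw [hB, Diag.realize_pappB, Diag.realize_papp]
  constructor
  · intro hAll
    exact hAll _ hApp
  · intro hP b hb
    have hb' : b = a := hau b ((Diag.realize_outFormula).mpr hb)
    have hc' : Diag.NM (↑M) (code (papp B n)) = a := hau _ ((Diag.realize_outFormula).mpr hApp)
    rw [hb', ← hc']
    exact hP
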